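/- Let (E, L, E) be a labeled space with E the smallest non-degenerate accommodating set. Suppose (E, L, E) is strongly cofinal and for every nonempty A ∈ E and every B ∈ E there exists C ∈ E_reg with B \ C ∈ H(A). Then (E, L, E) is minimal, i.e., the only hereditary saturated subsets of E are {∅} and E. -/

import Mathlib

universe u v

variable {V : Type u} {Λ : Type v}

/-- The relative range `r(S, α)` of a set of vertices along a labeled path. -/
def relRange (Edge : V → Λ → V → Prop) : Set V → List Λ → Set V
  | S, [] => S
  | S, a :: α => relRange Edge {w | ∃ u ∈ S, Edge u a w} α

/-- The range `r(α)` of a labeled path. -/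
def lrange (Edge : V → Λ → V → Prop) (α : List Λ) : Set V :=
  relRange Edge Set.univ α

/-- `α` is a (nonempty) labeled path of the labeled graph. -/
def IsLP (Edge : V → Λ → V → Prop) (α : List Λ) : Prop :=
  α ≠ [] ∧ (lrange Edge α).Nonempty

/-- `L(SE¹)`: labels of edges emitted from `S`. -/
def edgeLabels (Edge : V → Λ → V → Prop) (S : Set V) : Set Λ :=
  {a | ∃ u ∈ S, ∃ w, Edge u a w}

/-- `S` is regular: every nonempty `B ∈ ℬ` with `B ⊆ S` emits a finite nonzero set of labels. -/
def RegularSet (Edge : V → Λ → V → Prop) (ℬ : Set (Set V)) (S : Set V) : Prop :=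
  ∀ B ∈ ℬ, B ⊆ S → B.Nonempty →
    (edgeLabels Edge B).Finite ∧ (edgeLabels Edge B).Nonempty

/-- `H ⊆ ℬ` is hereditary. -/
def Hered (Edge : V → Λ → V → Prop) (ℬ H : Set (Set V)) : Prop :=
  H ⊆ ℬ ∧ (∀ A ∈ H, ∀ α : List Λ, IsLP Edge α → relRange Edge A α ∈ H) ∧
    (∀ A ∈ H, ∀ B ∈ H, A ∪ B ∈ H) ∧ (∀ A ∈ H, ∀ B ∈ ℬ, B ⊆ A → B ∈ H)

/-- `H` is saturated. -/
def Satur (Edge : V → Λ → V → Prop) (ℬ H : Set (Set V)) : Prop :=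
  ∀ A ∈ ℬ, RegularSet Edge ℬ A →
    (∀ α : List Λ, IsLP Edge α → relRange Edge A α ∈ H) → A ∈ H

/-- `H(A)`: sets covered by finitely many relative ranges `r(A, αᵢ)`, `αᵢ ∈ L^#(E)`. -/
def HSet (Edge : V → Λ → V → Prop) (ℬ : Set (Set V)) (A : Set V) : Set (Set V) :=
  {B ∈ ℬ | ∃ l : List (List Λ), (∀ α ∈ l, α = [] ∨ IsLP Edge α) ∧
    B ⊆ ⋃ α ∈ l, relRange Edge A α}

/-- `S(H(A))`: the saturation of `H(A)`. -/
def SHSet (Edge : V → Λ → V → Prop) (ℬ : Set (Set V)) (A : Set V) : Set (Set V) :=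
  {B ∈ ℬ | ∃ n : ℕ,
    (∀ β : List Λ, (β = [] ∨ IsLP Edge β) → β.length = n →
      relRange Edge B β ∈ HSet Edge ℬ A) ∧
    (∀ γ : List Λ, (γ = [] ∨ IsLP Edge γ) → γ.length < n →
      ∃ C ∈ HSet Edge ℬ A, ∃ D ∈ ℬ, RegularSet Edge ℬ D ∧ relRange Edge B γ = C ∪ D)}

/-- `ℬ` is an accommodating set for the labeled graph. -/
def Accommodating (Edge : V → Λ → V → Prop) (ℬ : Set (Set V)) : Prop :=
  (∀ α : List Λ, IsLP Edge α → lrange Edge α ∈ ℬ) ∧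
    (∀ A ∈ ℬ, ∀ α : List Λ, IsLP Edge α → relRange Edge A α ∈ ℬ) ∧
    (∀ A ∈ ℬ, ∀ B ∈ ℬ, A ∪ B ∈ ℬ) ∧ (∀ A ∈ ℬ, ∀ B ∈ ℬ, A ∩ B ∈ ℬ)

/-- `ℬ` is non-degenerate: closed under relative complements (and contains `∅`). -/
def NonDegenerate (ℬ : Set (Set V)) : Prop :=
  (∅ : Set V) ∈ ℬ ∧ ∀ A ∈ ℬ, ∀ B ∈ ℬ, A \ B ∈ ℬ

/-- The labeled space is weakly left-resolving. -/
def WLR (Edge : V → Λ → V → Prop) (ℬ : Set (Set V)) : Prop :=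
  ∀ A ∈ ℬ, ∀ B ∈ ℬ, ∀ α : List Λ, IsLP Edge α →
    relRange Edge (A ∩ B) α = relRange Edge A α ∩ relRange Edge B α

/-- `ℬ` is the smallest non-degenerate accommodating set. -/
def SmallestAccom (Edge : V → Λ → V → Prop) (ℬ : Set (Set V)) : Prop :=
  Accommodating Edge ℬ ∧ NonDegenerate ℬ ∧
    ∀ ℬ' : Set (Set V), Accommodating Edge ℬ' → NonDegenerate ℬ' → ℬ ⊆ ℬ'

/-- `x_{[1,n]}`: the length-`n` prefix of an infinite word. -/
def wordPrefix (x : ℕ → Λ) (n : ℕ) : List Λ := List.ofFn fun i : Fin n => x i.val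

/-- `x` lies in the closure of `L(E^∞)`: all finite prefixes are labeled paths. -/
def InfWord (Edge : V → Λ → V → Prop) (x : ℕ → Λ) : Prop :=
  ∀ n : ℕ, 1 ≤ n → IsLP Edge (wordPrefix x n)

/-- Strong cofinality of a labeled space. -/
def StrCofinal (Edge : V → Λ → V → Prop) (ℬ : Set (Set V)) : Prop :=
  ∀ A ∈ ℬ, A.Nonempty → ∀ x : ℕ → Λ, InfWord Edge x →
    ∃ N : ℕ, 1 ≤ N ∧ ∃ l : List (List Λ), (∀ α ∈ l, IsLP Edge α) ∧
      lrange Edge (wordPrefix x N) ⊆ ⋃ α ∈ l, relRange Edge A α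

/-- Minimality: the only hereditary saturated subsets of `ℬ` are `{∅}` and `ℬ`. -/
def MinimalLS (Edge : V → Λ → V → Prop) (ℬ : Set (Set V)) : Prop :=
  ∀ H : Set (Set V), Hered Edge ℬ H → Satur Edge ℬ H → H ⊆ {∅} ∨ H = ℬ

/-- `L(SEⁿ)`: labels of paths of length `n` with source in `S`. -/
def labelsOfLen (Edge : V → Λ → V → Prop) (S : Set V) (n : ℕ) : Set (List Λ) :=
  {β | β.length = n ∧ (relRange Edge S β).Nonempty}

/-- The labeled space is disagreeable. -/
def Disagreeable (Edge : V → Λ → V → Prop) (ℬ : Set (Set V)) : Prop :=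
  ∀ A ∈ ℬ, A.Nonempty → ∀ β : List Λ, IsLP Edge β →
    ∃ n : ℕ, 1 ≤ n ∧ labelsOfLen Edge A (β.length * n) ≠ {(List.replicate n β).flatten}

/-- `(α, A)` is a cycle. -/
def IsCycle (Edge : V → Λ → V → Prop) (ℬ : Set (Set V)) (α : List Λ) (A : Set V) : Prop :=
  IsLP Edge α ∧ A ∈ ℬ ∧ A.Nonempty ∧ ∀ B ∈ ℬ, B ⊆ A → relRange Edge B α = B

/-- The cycle `(α, A)` has an exit. -/
def CycleHasExit (Edge : V → Λ → V → Prop) (ℬ : Set (Set V)) (α : List Λ) (A : Set V) : Prop :=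
  ∃ t : ℕ, 1 ≤ t ∧ t ≤ α.length ∧ ∃ B ∈ ℬ, B.Nonempty ∧
    B ⊆ relRange Edge A (α.take t) ∧
    edgeLabels Edge B ≠ {a : Λ | α[t % α.length]? = some a}

/-- The cycle `(α, A)` has no exits. -/
def CycleNoExit (Edge : V → Λ → V → Prop) (ℬ : Set (Set V)) (α : List Λ) (A : Set V) : Prop :=
  ∀ t : ℕ, 1 ≤ t → t ≤ α.length → ∀ B ∈ ℬ, B.Nonempty →
    B ⊆ relRange Edge A (α.take t) →
    RegularSet Edge ℬ B ∧ edgeLabels Edge B = {a : Λ | α[t % α.length]? = some a}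

/-- Condition (L): every cycle has an exit. -/
def CondL (Edge : V → Λ → V → Prop) (ℬ : Set (Set V)) : Prop :=
  ∀ (α : List Λ) (A : Set V), IsCycle Edge ℬ α A → CycleHasExit Edge ℬ α A

/-- `α` is a loop at `A`. -/
def IsLoop (Edge : V → Λ → V → Prop) (α : List Λ) (A : Set V) : Prop :=
  IsLP Edge α ∧ A ⊆ relRange Edge A α

/-- The loop `(α, A)` has an exit. -/
def LoopHasExit (Edge : V → Λ → V → Prop) (α : List Λ) (A : Set V) : Prop :=
  {β : List Λ | ∃ k : ℕ, 1 ≤ k ∧ k ≤ α.length ∧ β = α.take k} ⊂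
      {β : List Λ | 1 ≤ β.length ∧ β.length ≤ α.length ∧ (relRange Edge A β).Nonempty} ∨
    A ⊂ relRange Edge A α

/-- `β` is an irreducible path: not a repetition of a proper initial path. -/
def IrreduciblePath (β : List Λ) : Prop :=
  ∀ k : ℕ, 1 ≤ k → k < β.length → ∀ m : ℕ, β ≠ (List.replicate m (β.take k)).flatten

/-- The generalized vertex `[v]_l`. -/
def gvClass (Edge : V → Λ → V → Prop) (l : ℕ) (v : V) : Set V :=
  {w | ∀ β : List Λ, 1 ≤ β.length → β.length ≤ l → (v ∈ lrange Edge β ↔ w ∈ lrange Edge β)}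

/-- `s(x)`: sources of infinite paths labeled by `x`. -/
def srcInf (Edge : V → Λ → V → Prop) (x : ℕ → Λ) : Set V :=
  {w | ∃ p : ℕ → V, p 0 = w ∧ ∀ n : ℕ, Edge (p n) (x n) (p (n + 1))}


/-!
Suppose `H` is hereditary and saturated, contains a nonempty `A`, but misses some `B ∈ ℰ`. Then
`H(A) ⊆ H`. If `r(B, β) ∉ H`, pick a regular `C` with `r(B, β) \ C ∈ H(A) ⊆ H`; the regular part
`r(B, β) ∩ C` is then outside `H`, so by saturation some label `a` has `r(B, βa) ∉ H`. Iterating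
yields an infinite word `x` all of whose prefixes `x_{[1,n]}` satisfy `r(B, x_{[1,n]}) ∉ H`, while
strong cofinality puts `r(B, x_{[1,N]}) ⊆ r(x_{[1,N]})` into `H(A) ⊆ H` for some `N`.
-/

section LabeledSpace

variable {Edge : V → Λ → V → Prop}

theorem relRange_mono {S T : Set V} (h : S ⊆ T) (α : List Λ) :
    relRange Edge S α ⊆ relRange Edge T α := by
  induction α generalizing S T with
  | nil => exact h
  | cons a α ih => exact ih fun _ ⟨u, hu, he⟩ => ⟨u, h hu, he⟩

theorem relRange_subset_lrange (S : Set V) (α : List Λ) :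
    relRange Edge S α ⊆ lrange Edge α :=
  relRange_mono (Set.subset_univ S) α

theorem relRange_append (S : Set V) (α β : List Λ) :
    relRange Edge S (α ++ β) = relRange Edge (relRange Edge S α) β := by
  induction α generalizing S with
  | nil => rfl
  | cons a α ih => exact ih _

theorem isLP_of_relRange_nonempty {S : Set V} {α : List Λ} (hα : α ≠ [])
    (hS : (relRange Edge S α).Nonempty) : IsLP Edge α :=
  ⟨hα, hS.mono (relRange_subset_lrange S α)⟩

/-- Along a word that is not a labeled path every relative range is empty. -/
theorem relRange_mem_of_forall_isLP {F : Set (Set V)} (hempty : ∅ ∈ F)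
    (hF : ∀ A ∈ F, ∀ α : List Λ, IsLP Edge α → relRange Edge A α ∈ F) {A : Set V}
    (hA : A ∈ F) (α : List Λ) : relRange Edge A α ∈ F := by
  rcases eq_or_ne α [] with rfl | hα
  · exact hA
  rcases (relRange Edge A α).eq_empty_or_nonempty with h | h
  · exact h ▸ hempty
  · exact hF A hA α (isLP_of_relRange_nonempty hα h)

theorem RegularSet.mono {ℬ : Set (Set V)} {S T : Set V} (hT : RegularSet Edge ℬ T)
    (h : S ⊆ T) : RegularSet Edge ℬ S :=
  fun B hB hBS hBne => hT B hB (hBS.trans h) hBne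

theorem wordPrefix_succ (x : ℕ → Λ) (n : ℕ) :
    wordPrefix x (n + 1) = wordPrefix x n ++ [x n] := by
  rw [wordPrefix, List.ofFn_succ', List.concat_eq_append]
  rfl

theorem exists_forall_wordPrefix {P : List Λ → Prop} (h0 : P [])
    (hstep : ∀ β, P β → ∃ a, P (β ++ [a])) : ∃ x : ℕ → Λ, ∀ n, P (wordPrefix x n) := by
  choose next hnext using hstep
  let seq : ℕ → {β // P β} := fun n =>
    Nat.rec ⟨[], h0⟩ (fun _ β => ⟨β.1 ++ [next β.1 β.2], hnext β.1 β.2⟩) n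
  refine ⟨fun n => next (seq n).1 (seq n).2, fun n => ?_⟩
  suffices wordPrefix (fun n => next (seq n).1 (seq n).2) n = (seq n).1 from this ▸ (seq n).2
  induction n with
  | zero => rfl
  | succ n ih => rw [wordPrefix_succ, ih]

namespace Hered

variable {ℬ H : Set (Set V)}

theorem relRange_mem (hH : Hered Edge ℬ H) (hempty : ∅ ∈ H) {A : Set V} (hA : A ∈ H)
    (α : List Λ) : relRange Edge A α ∈ H :=
  relRange_mem_of_forall_isLP hempty hH.2.1 hA α

theorem hSet_subset (hH : Hered Edge ℬ H) (hempty : ∅ ∈ H) {A : Set V} (hA : A ∈ H) :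
    HSet Edge ℬ A ⊆ H := by
  have hcover (l : List (List Λ)) : (⋃ α ∈ l, relRange Edge A α) ∈ H := by
    induction l with
    | nil => simpa using hempty
    | cons α l ih => simpa using hH.2.2.1 _ (hH.relRange_mem hempty hA α) _ ih
  rintro B ⟨hB, l, -, hBl⟩
  exact hH.2.2.2 _ (hcover l) B hB hBl

/-- `S = (S \ C) ∪ (S ∩ C)` with `S \ C ∈ H`, so the regular set `S ∩ C` lies outside `H` and
saturation applies to it. -/
theorem exists_relRange_singleton_not_mem (hacc : Accommodating Edge ℬ)
    (hH : Hered Edge ℬ H) (hSat : Satur Edge ℬ H) (hempty : ∅ ∈ H) {S C : Set V} (hS : S ∈ ℬ)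
    (hC : C ∈ ℬ) (hCreg : RegularSet Edge ℬ C) (hdiff : S \ C ∈ H) (hSH : S ∉ H) :
    ∃ a, relRange Edge S [a] ∉ H := by
  have hD : S ∩ C ∈ ℬ := hacc.2.2.2 S hS C hC
  have hDH : S ∩ C ∉ H := fun hDH =>
    hSH (hH.2.2.2 _ (hH.2.2.1 _ hdiff _ hDH) S hS (Set.sdiff_union_inter S C).ge)
  obtain ⟨α, hα, hαH⟩ : ∃ α, IsLP Edge α ∧ relRange Edge (S ∩ C) α ∉ H := by
    by_contra! h
    exact hDH (hSat _ hD (hCreg.mono Set.inter_subset_right) h)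
  obtain ⟨a, α', rfl⟩ := List.exists_cons_of_ne_nil hα.1
  have haH : relRange Edge (S ∩ C) [a] ∉ H := fun ha => hαH (hH.relRange_mem hempty ha α')
  refine ⟨a, fun hSa => haH (hH.2.2.2 _ hSa _ ?_ (relRange_mono Set.inter_subset_left [a]))⟩
  exact relRange_mem_of_forall_isLP (hH.1 hempty) hacc.2.1 hD [a]

theorem exists_infWord_relRange_not_mem (hacc : Accommodating Edge ℬ)
    (hH : Hered Edge ℬ H) (hSat : Satur Edge ℬ H) (hempty : ∅ ∈ H)
    (hreg : ∀ B ∈ ℬ, ∃ C ∈ ℬ, RegularSet Edge ℬ C ∧ B \ C ∈ H) {B : Set V} (hB : B ∈ ℬ)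
    (hBH : B ∉ H) : ∃ x, InfWord Edge x ∧ ∀ n, relRange Edge B (wordPrefix x n) ∉ H := by
  have hBβ (β : List Λ) : relRange Edge B β ∈ ℬ :=
    relRange_mem_of_forall_isLP (hH.1 hempty) hacc.2.1 hB β
  obtain ⟨x, hx⟩ := exists_forall_wordPrefix (P := fun β => relRange Edge B β ∉ H) hBH
    fun β hβ => by
      obtain ⟨C, hC, hCreg, hdiff⟩ := hreg _ (hBβ β)
      obtain ⟨a, ha⟩ :=
        hH.exists_relRange_singleton_not_mem hacc hSat hempty (hBβ β) hC hCreg hdiff hβ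
      exact ⟨a, by rwa [relRange_append]⟩
  refine ⟨x, fun n hn => isLP_of_relRange_nonempty (S := B) ?_ ?_, hx⟩
  · rw [← List.length_pos_iff, wordPrefix, List.length_ofFn]
    exact hn
  · exact Set.nonempty_iff_ne_empty.2 fun h => hx n (h ▸ hempty)

end Hered

end LabeledSpace

theorem cofinal_and_regular_implies_minimal_general (Edge : V → Λ → V → Prop)
    (ℰ : Set (Set V)) (hsm : SmallestAccom Edge ℰ)
    (hcof : StrCofinal Edge ℰ)
    (hreg : ∀ A ∈ ℰ, A.Nonempty → ∀ B ∈ ℰ, ∃ C ∈ ℰ, RegularSet Edge ℰ C ∧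
      B \ C ∈ HSet Edge ℰ A) :
    MinimalLS Edge ℰ := by
  obtain ⟨hacc, ⟨hempty, -⟩, -⟩ := hsm
  intro H hH hSat
  by_cases hne : ∃ A ∈ H, A.Nonempty
  swap
  · exact Or.inl fun A hA => Set.not_nonempty_iff_eq_empty.1 fun hAne => hne ⟨A, hA, hAne⟩
  right
  obtain ⟨A, hA, hAne⟩ := hne
  have hHempty : ∅ ∈ H := hH.2.2.2 A hA ∅ hempty (Set.empty_subset A)
  have hAH : HSet Edge ℰ A ⊆ H := hH.hSet_subset hHempty hA
  refine hH.1.antisymm fun B hB => by_contra fun hBH => ?_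
  obtain ⟨x, hx, hxH⟩ := hH.exists_infWord_relRange_not_mem hacc hSat hHempty
    (fun B hB => (hreg A (hH.1 hA) hAne B hB).imp fun C ⟨hC, hCreg, hd⟩ => ⟨hC, hCreg, hAH hd⟩)
    hB hBH
  obtain ⟨N, -, l, hl, hcov⟩ := hcof A (hH.1 hA) hAne x hx
  exact hxH N (hAH ⟨relRange_mem_of_forall_isLP hempty hacc.2.1 hB _, l,
    fun α hα => Or.inr (hl α hα), (relRange_subset_lrange _ _).trans hcov⟩)

/-- strong cofinality together with the regular-difference condition
implies minimality. -/
theorem cofinal_and_regular_implies_minimal (Edge : V → Λ → V → Prop)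
    (ℰ : Set (Set V)) (hsm : SmallestAccom Edge ℰ) (hwlr : WLR Edge ℰ)
    (hcof : StrCofinal Edge ℰ)
    (hreg : ∀ A ∈ ℰ, A.Nonempty → ∀ B ∈ ℰ, ∃ C ∈ ℰ, RegularSet Edge ℰ C ∧
      B \ C ∈ HSet Edge ℰ A) :
    MinimalLS Edge ℰ :=
  cofinal_and_regular_implies_minimal_general Edge ℰ hsm hcof hreg
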